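/- arXiv:0909.4267 — 5 statements merged into one kernel-verified Lean document; each statement's English description precedes it below -/
import Mathlib

section
/- Let γ ∈ ℝ, r(0) ∈ ℝ, and let σ be a positive Borel measure on ℝ with ∫_ℝ dσ(u)/(u²+1) < ∞, and suppose r(t) = r(0) + iγt − ∫_ℝ g_t(u) dσ(u) for all t ∈ ℝ. Then for all t, s ∈ ℝ, K_r(t,s) = r(t) + conj(r(s)) − r(t−s) − r(0) = ∫_ℝ e_t(u) conj(e_s(u)) dσ(u), where e_t(u) = (e^{itu} − 1)/u for u ≠ 0 and e_t(0) = it. In particular, K_r is a positive kernel on ℝ. -/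
open MeasureTheory Complex
open scoped ENNReal

/-- The kernel `K_r(t,s) = r(t) + conj(r(s)) - r(t-s) - r(0)`. -/
noncomputable def Kker (r : ℝ → ℂ) (t s : ℝ) : ℂ :=
  r t + (starRingEnd ℂ) (r s) - r (t - s) - r 0

/-- Positivity of a kernel on a set `A ⊆ ℝ`. -/
def IsPosKernel (K : ℝ → ℝ → ℂ) (A : Set ℝ) : Prop :=
  ∀ (n : ℕ) (t : Fin n → ℝ), (∀ i, t i ∈ A) → ∀ c : Fin n → ℂ,
    (∑ i, ∑ j, c i * (starRingEnd ℂ) (c j) * K (t i) (t j)).im = 0 ∧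
    0 ≤ (∑ i, ∑ j, c i * (starRingEnd ℂ) (c j) * K (t i) (t j)).re

/-- `g_t(u) = (e^{itu} - 1 - itu/(u²+1))/u²` for `u ≠ 0`, `g_t(0) = -t²/2`. -/
noncomputable def gfun (t u : ℝ) : ℂ :=
  if u = 0 then -(t : ℂ) ^ 2 / 2
  else (Complex.exp (Complex.I * t * u) - 1 - Complex.I * t * u / ((u : ℂ) ^ 2 + 1)) / (u : ℂ) ^ 2

/-- `e_t(u) = (e^{itu} - 1)/u` for `u ≠ 0`, `e_t(0) = it`. -/
noncomputable def efun (t u : ℝ) : ℂ :=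
  if u = 0 then Complex.I * t else (Complex.exp (Complex.I * t * u) - 1) / (u : ℂ)


/-!
Pointwise in `u` one has `e_t(u) conj(e_s(u)) = g_{t-s}(u) - g_t(u) - conj(g_s(u))`: with
`a = e^{itu}`, `b = e^{isu}` both sides have numerator `(a - 1)(b⁻¹ - 1)` over `u²`, the
compensating terms `iτu/(u²+1)` cancelling because `(t - s) - t + s = 0`. Integrating against `σ`
and inserting the representation of `r` (the drift terms `iγτ` cancel the same way, the constants
because `r(0)` is real) gives the integral formula for `K_r`. A kernel of the form
`∫ F_t conj(F_s) dσ` is positive, its quadratic form being `∫ |∑ c_i F_{t_i}|² dσ`.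
-/

lemma MeasureTheory.Integrable.conj {α : Type*} [MeasurableSpace α] {μ : Measure α} {f : α → ℂ}
    (hf : Integrable f μ) : Integrable (fun x => starRingEnd ℂ (f x)) μ :=
  (conjCLE : ℂ →L[ℝ] ℂ).integrable_comp hf

lemma sum_sum_mul_conj_mul_mul_conj {ι : Type*} (s : Finset ι) (c a : ι → ℂ) :
    ∑ i ∈ s, ∑ j ∈ s, c i * starRingEnd ℂ (c j) * (a i * starRingEnd ℂ (a j)) =
      normSq (∑ i ∈ s, c i * a i) := by
  rw [← mul_conj, map_sum, Finset.sum_mul_sum]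
  refine Finset.sum_congr rfl fun i _ => Finset.sum_congr rfl fun j _ => ?_
  rw [map_mul]
  ring

lemma isPosKernel_of_eq_integral_mul_conj {α : Type*} [MeasurableSpace α] {μ : Measure α}
    {K : ℝ → ℝ → ℂ} {F : ℝ → α → ℂ}
    (hF : ∀ t s, Integrable (fun u => F t u * starRingEnd ℂ (F s u)) μ)
    (hK : ∀ t s, K t s = ∫ u, F t u * starRingEnd ℂ (F s u) ∂μ) (A : Set ℝ) :
    IsPosKernel K A := by
  intro n t _ c
  have hquad : ∑ i, ∑ j, c i * starRingEnd ℂ (c j) * K (t i) (t j) =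
      ((∫ u, normSq (∑ i, c i * F (t i) u) ∂μ : ℝ) : ℂ) := calc
    _ = ∑ i, ∑ j, ∫ u, c i * starRingEnd ℂ (c j) * (F (t i) u * starRingEnd ℂ (F (t j) u)) ∂μ := by
      simp_rw [hK, integral_const_mul]
    _ = ∫ u, ∑ i, ∑ j, c i * starRingEnd ℂ (c j) * (F (t i) u * starRingEnd ℂ (F (t j) u)) ∂μ := by
      rw [integral_finsetSum _ fun i _ => integrable_finsetSum _ fun j _ => (hF _ _).const_mul _]
      exact Finset.sum_congr rfl fun i _ =>
        (integral_finsetSum _ fun j _ => (hF _ _).const_mul _).symm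
    _ = _ := (integral_congr_ae (ae_of_all _ fun u => sum_sum_mul_conj_mul_mul_conj _ _ _)).trans
      integral_ofReal
  rw [hquad, ofReal_im, ofReal_re]
  exact ⟨rfl, integral_nonneg fun u => normSq_nonneg _⟩

lemma efun_mul_conj_efun (t s u : ℝ) :
    efun t u * starRingEnd ℂ (efun s u) = gfun (t - s) u - gfun t u - starRingEnd ℂ (gfun s u) := by
  rcases eq_or_ne u 0 with rfl | hu
  · simp only [efun, gfun, ↓reduceIte, map_mul, map_div₀, map_neg, map_pow, map_ofNat, conj_I,
      conj_ofReal]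
    push_cast
    linear_combination (-(t : ℂ) * s) * I_sq
  · have hconj : starRingEnd ℂ (exp (I * s * u)) = (exp (I * s * u))⁻¹ := by
      rw [← exp_conj, ← exp_neg]
      simp only [map_mul, conj_I, conj_ofReal, neg_mul]
    have hsub : exp (I * ↑(t - s) * u) = exp (I * t * u) * (exp (I * s * u))⁻¹ := by
      rw [← exp_neg, ← exp_add]
      push_cast
      ring_nf
    simp only [efun, gfun, if_neg hu, map_div₀, map_sub, map_add, map_mul, map_one, map_pow, conj_I,
      conj_ofReal, hconj, hsub]
    field_simp
    push_cast
    ring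

lemma integrable_efun_mul_conj_efun {σ : Measure ℝ} (hint : ∀ t, Integrable (gfun t) σ)
    (t s : ℝ) : Integrable (fun u => efun t u * starRingEnd ℂ (efun s u)) σ := by
  simp_rw [efun_mul_conj_efun]
  exact ((hint (t - s)).sub (hint t)).sub (hint s).conj

lemma integral_efun_mul_conj_efun {σ : Measure ℝ} (hint : ∀ t, Integrable (gfun t) σ)
    (t s : ℝ) :
    ∫ u, efun t u * starRingEnd ℂ (efun s u) ∂σ =
      (∫ u, gfun (t - s) u ∂σ) - (∫ u, gfun t u ∂σ) - starRingEnd ℂ (∫ u, gfun s u ∂σ) := by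
  simp_rw [efun_mul_conj_efun]
  rw [integral_sub ((hint _).sub' (hint _)) (hint s).conj, integral_sub (hint _) (hint _),
    integral_conj]

lemma Kker_eq_integral_efun_mul_conj_efun {γ : ℝ} {σ : Measure ℝ} {r : ℝ → ℂ}
    (hr0 : (r 0).im = 0) (hint : ∀ t, Integrable (gfun t) σ)
    (hrep : ∀ t, r t = r 0 + I * γ * t - ∫ u, gfun t u ∂σ) (t s : ℝ) :
    Kker r t s = ∫ u, efun t u * starRingEnd ℂ (efun s u) ∂σ := by
  rw [integral_efun_mul_conj_efun hint, Kker, hrep t, hrep s, hrep (t - s)]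
  simp only [map_sub, map_add, map_mul, conj_I, conj_ofReal, conj_eq_iff_im.mpr hr0]
  push_cast
  ring

theorem kernel_integral_representation_general (γ : ℝ) (σ : Measure ℝ)
    (r : ℝ → ℂ) (hr0 : (r 0).im = 0)
    (hint : ∀ t : ℝ, Integrable (gfun t) σ)
    (hrep : ∀ t : ℝ, r t = r 0 + Complex.I * γ * t - ∫ u, gfun t u ∂σ) :
    (∀ t s : ℝ, Kker r t s = ∫ u, efun t u * (starRingEnd ℂ) (efun s u) ∂σ) ∧
    IsPosKernel (Kker r) Set.univ :=
  have hK := Kker_eq_integral_efun_mul_conj_efun hr0 hint hrep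
  ⟨hK, isPosKernel_of_eq_integral_mul_conj (integrable_efun_mul_conj_efun hint) hK _⟩

/-- If `r(t) = r(0) + iγt - ∫ g_t dσ` with `∫ dσ(u)/(u²+1) < ∞`, then
`K_r(t,s) = ∫ e_t(u) conj(e_s(u)) dσ(u)`; in particular `K_r` is a positive kernel on `ℝ`. -/
theorem kernel_integral_representation (γ : ℝ) (σ : Measure ℝ)
    (hσ : (∫⁻ u : ℝ, ENNReal.ofReal (1 / (u ^ 2 + 1)) ∂σ) < ⊤)
    (r : ℝ → ℂ) (hr0 : (r 0).im = 0)
    (hint : ∀ t : ℝ, Integrable (gfun t) σ)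
    (hrep : ∀ t : ℝ, r t = r 0 + Complex.I * γ * t - ∫ u, gfun t u ∂σ) :
    (∀ t s : ℝ, Kker r t s = ∫ u, efun t u * (starRingEnd ℂ) (efun s u) ∂σ) ∧
    IsPosKernel (Kker r) Set.univ :=
  kernel_integral_representation_general γ σ r hr0 hint hrep
end

section
/- Let r : ℝ → ℂ be continuous with r(−t) = conj(r(t)) for all t ∈ ℝ, and assume the kernel K_r(t,s) = r(t) + conj(r(s)) − r(t−s) − r(0) is positive on ℝ. Then there exists a constant M > 0 such that |r(t)| ≤ M(1 + |t|³) for all t ∈ ℝ. -/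
open MeasureTheory Complex

/-!
Positivity of `K_r` forces `K_r` to be Hermitian, hence `r(-t) = conj (r t)`, and makes every
matrix `(K_r(tᵢ, tⱼ))ᵢⱼ` positive semidefinite; its `2 × 2` minors give
`|K_r(x, y)|² ≤ a(x) a(y)` for `a(t) = K_r(t, t) = 2 Re (r t - r 0) ≥ 0`. Since
`r(x + y) - r 0 = (r x - r 0) + (r y - r 0) - K_r(x, -y)`, the function `√a` is subadditive and
`r - r 0` is additive up to an error of at most `√a(x) √a(y)`. Writing `t = n u` with
`n = ⌈|t|⌉` and `|u| ≤ 1`, a bound for `r` on `[-1, 1]` yields `‖r t‖ = O(t²)`.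
-/

open scoped ComplexConjugate ComplexOrder

namespace IsPosKernel

variable {K : ℝ → ℝ → ℂ} {A : Set ℝ} {x y : ℝ}

theorem sum_nonneg (h : IsPosKernel K A) {n : ℕ} {t : Fin n → ℝ} (ht : ∀ i, t i ∈ A)
    (c : Fin n → ℂ) : 0 ≤ ∑ i, ∑ j, c i * conj (c j) * K (t i) (t j) :=
  Complex.nonneg_iff.2 ⟨(h n t ht c).2, (h n t ht c).1.symm⟩

theorem apply_self_nonneg (h : IsPosKernel K A) (hx : x ∈ A) : 0 ≤ K x x := by
  simpa using h.sum_nonneg (t := ![x]) (by simp [hx]) ![1]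

theorem re_apply_self_nonneg (h : IsPosKernel K A) (hx : x ∈ A) : 0 ≤ (K x x).re :=
  (Complex.nonneg_iff.1 (h.apply_self_nonneg hx)).1

theorem pair_nonneg (h : IsPosKernel K A) (hx : x ∈ A) (hy : y ∈ A) (c d : ℂ) :
    0 ≤ c * conj c * K x x + c * conj d * K x y + (d * conj c * K y x + d * conj d * K y y) := by
  simpa [Fin.sum_univ_two] using
    h.sum_nonneg (t := ![x, y]) (by simp [Fin.forall_fin_two, hx, hy]) ![c, d]

theorem apply_swap (h : IsPosKernel K A) (hx : x ∈ A) (hy : y ∈ A) : K y x = conj (K x y) := by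
  have hxx := (Complex.nonneg_iff.1 (h.apply_self_nonneg hx)).2
  have hyy := (Complex.nonneg_iff.1 (h.apply_self_nonneg hy)).2
  have h1 := (Complex.nonneg_iff.1 (h.pair_nonneg hx hy 1 1)).2
  have hI := (Complex.nonneg_iff.1 (h.pair_nonneg hx hy 1 I)).2
  simp only [map_one, mul_one, one_mul, add_im, conj_I, mul_neg, neg_mul, I_mul_I, neg_neg, neg_im,
    mul_im, I_re, zero_mul, I_im, zero_add] at h1 hI
  apply Complex.ext
  · rw [conj_re]; linarith
  · rw [conj_im]; linarith

theorem posSemidef_matrix_of (h : IsPosKernel K A) {n : ℕ} {t : Fin n → ℝ} (ht : ∀ i, t i ∈ A) :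
    (Matrix.of fun i j ↦ K (t i) (t j)).PosSemidef := by
  refine Matrix.PosSemidef.of_dotProduct_mulVec_nonneg ?_ fun c ↦ ?_
  · ext i j
    simp [h.apply_swap (ht i) (ht j)]
  · convert h.sum_nonneg ht (star c) using 1
    simp only [dotProduct, Matrix.mulVec, Finset.mul_sum, Pi.star_apply, Matrix.of_apply,
      starRingEnd_apply, star_star, mul_assoc, mul_comm (K _ _)]

theorem normSq_apply_le (h : IsPosKernel K A) (hx : x ∈ A) (hy : y ∈ A) :
    normSq (K x y) ≤ (K x x).re * (K y y).re := by
  have hdet :=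
    (h.posSemidef_matrix_of (t := ![x, y]) (by simp [Fin.forall_fin_two, hx, hy])).det_nonneg
  simp only [Matrix.det_fin_two, Matrix.of_apply, Matrix.cons_val_zero, Matrix.cons_val_one,
    Matrix.cons_val_fin_one, h.apply_swap hx hy, sub_nonneg] at hdet
  rw [Complex.mul_conj, Complex.le_def] at hdet
  have hxx := (Complex.nonneg_iff.1 (h.apply_self_nonneg hx)).2
  simpa [← hxx] using hdet.1

theorem norm_apply_le (h : IsPosKernel K A) (hx : x ∈ A) (hy : y ∈ A) :
    ‖K x y‖ ≤ √(K x x).re * √(K y y).re := by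
  rw [Complex.norm_def, ← Real.sqrt_mul (h.re_apply_self_nonneg hx)]
  exact Real.sqrt_le_sqrt (h.normSq_apply_le hx hy)

end IsPosKernel

open Set

section Kker

variable {r : ℝ → ℂ}

theorem Kker_self_re (t : ℝ) : (Kker r t t).re = 2 * ((r t).re - (r 0).re) := by
  simp only [Kker, sub_self, sub_re, add_re, conj_re]
  ring

theorem Kker_self_neg_re (hsym : ∀ t, r (-t) = conj (r t)) (t : ℝ) :
    (Kker r (-t) (-t)).re = (Kker r t t).re := by
  rw [Kker_self_re, Kker_self_re, hsym, conj_re]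

theorem Kker_neg_right (hsym : ∀ t, r (-t) = conj (r t)) (x y : ℝ) :
    Kker r x (-y) = r x + r y - r (x + y) - r 0 := by
  simp [Kker, hsym]

theorem apply_neg_eq_conj_of_isPosKernel (hpos : IsPosKernel (Kker r) univ) (t : ℝ) :
    r (-t) = conj (r t) := by
  have h0 := hpos.apply_swap (mem_univ 0) (mem_univ 0)
  have ht := hpos.apply_swap (mem_univ 0) (mem_univ t)
  simp only [Kker, sub_self, sub_zero, zero_sub, map_sub, map_add, conj_conj] at h0 ht
  rw [← conj_conj (r (-t))]
  congr 1
  linear_combination ht - h0 / 2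

variable (hpos : IsPosKernel (Kker r) univ)
include hpos

theorem sqrt_Kker_self_add_le (x y : ℝ) :
    √(Kker r (x + y) (x + y)).re ≤ √(Kker r x x).re + √(Kker r y y).re := by
  have hsym := apply_neg_eq_conj_of_isPosKernel hpos
  have hcross : -(Kker r x (-y)).re ≤ √(Kker r x x).re * √(Kker r y y).re :=
    calc -(Kker r x (-y)).re ≤ ‖Kker r x (-y)‖ := (neg_le_abs _).trans (abs_re_le_norm _)
      _ ≤ √(Kker r x x).re * √(Kker r (-y) (-y)).re := hpos.norm_apply_le trivial trivial
      _ = √(Kker r x x).re * √(Kker r y y).re := by rw [Kker_self_neg_re hsym]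
  have hx := Real.sq_sqrt (hpos.re_apply_self_nonneg (mem_univ x))
  have hy := Real.sq_sqrt (hpos.re_apply_self_nonneg (mem_univ y))
  rw [Real.sqrt_le_left (by positivity)]
  rw [Kker_neg_right hsym] at hcross
  simp only [Kker_self_re, sub_re, add_re] at hcross hx hy ⊢
  nlinarith

theorem sqrt_Kker_self_nat_mul_le (n : ℕ) (u : ℝ) :
    √(Kker r (n * u) (n * u)).re ≤ n * √(Kker r u u).re := by
  induction n with
  | zero => simp [Kker]
  | succ n ih =>
    push_cast
    calc √(Kker r ((n + 1) * u) ((n + 1) * u)).re = √(Kker r (n * u + u) (n * u + u)).re := by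
          ring_nf
      _ ≤ √(Kker r (n * u) (n * u)).re + √(Kker r u u).re := sqrt_Kker_self_add_le hpos _ _
      _ ≤ (n + 1) * √(Kker r u u).re := by linarith

theorem norm_apply_nat_mul_sub_le (n : ℕ) (u : ℝ) :
    ‖r (n * u) - r 0‖ ≤ n * ‖r u - r 0‖ + n ^ 2 * (Kker r u u).re := by
  have hsym := apply_neg_eq_conj_of_isPosKernel hpos
  have ha := hpos.re_apply_self_nonneg (mem_univ u)
  induction n with
  | zero => simp
  | succ n ih =>
    have hdefect : ‖Kker r (n * u) (-u)‖ ≤ n * (Kker r u u).re :=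
      calc ‖Kker r (n * u) (-u)‖ ≤ √(Kker r (n * u) (n * u)).re * √(Kker r (-u) (-u)).re :=
            hpos.norm_apply_le trivial trivial
        _ ≤ n * √(Kker r u u).re * √(Kker r u u).re := by
            rw [Kker_self_neg_re hsym]
            gcongr
            exact sqrt_Kker_self_nat_mul_le hpos n u
        _ = n * (Kker r u u).re := by rw [mul_assoc, Real.mul_self_sqrt ha]
    have hsplit : r ((n + 1 : ℕ) * u) - r 0
        = (r (n * u) - r 0) + (r u - r 0) - Kker r (n * u) (-u) := by
      rw [Kker_neg_right hsym]
      push_cast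
      ring_nf
    rw [hsplit]
    calc _ ≤ ‖r (n * u) - r 0‖ + ‖r u - r 0‖ + ‖Kker r (n * u) (-u)‖ :=
          norm_sub_le_of_le (norm_add_le _ _) le_rfl
      _ ≤ _ := by
          push_cast
          nlinarith

end Kker

theorem exists_nat_mul_eq (t : ℝ) :
    ∃ n : ℕ, (n : ℝ) ≤ |t| + 1 ∧ ∃ u ∈ Icc (-1 : ℝ) 1, n * u = t := by
  refine ⟨⌈|t|⌉₊, (Nat.ceil_lt_add_one (abs_nonneg t)).le, t / ⌈|t|⌉₊, ?_, ?_⟩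
  · rw [mem_Icc, ← abs_le, abs_div, Nat.abs_cast]
    exact div_le_one_of_le₀ (Nat.le_ceil _) (Nat.cast_nonneg _)
  · by_cases hn : ⌈|t|⌉₊ = 0
    · simp_all
    · field_simp

theorem sq_add_two_le {s : ℝ} (hs : 0 ≤ s) : (s + 2) ^ 2 ≤ 9 * (1 + s ^ 3) := by
  nlinarith [sq_nonneg (s - 1), mul_nonneg hs (sq_nonneg (s - 1))]

theorem norm_apply_le_of_norm_le_on_Icc {r : ℝ → ℂ} (hpos : IsPosKernel (Kker r) univ) {R : ℝ}
    (hR : ∀ u ∈ Icc (-1 : ℝ) 1, ‖r u‖ ≤ R) (t : ℝ) : ‖r t‖ ≤ 4 * R * (|t| + 2) ^ 2 := by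
  obtain ⟨n, hn, u, hu, rfl⟩ := exists_nat_mul_eq t
  have hr0 := hR 0 (by norm_num)
  have hru := hR u hu
  have hdiff : ‖r u - r 0‖ ≤ 2 * R := (norm_sub_le _ _).trans (by linarith)
  have ha : (Kker r u u).re ≤ 4 * R := by
    rw [Kker_self_re]
    linarith [re_le_norm (r u), (abs_le.1 (abs_re_le_norm (r 0))).1]
  have hR0 : 0 ≤ R := (norm_nonneg _).trans hr0
  calc ‖r (n * u)‖ ≤ ‖r 0‖ + ‖r (n * u) - r 0‖ := norm_le_insert' _ _
    _ ≤ R + (n * (2 * R) + n ^ 2 * (4 * R)) := by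
        gcongr
        exact (norm_apply_nat_mul_sub_le hpos n u).trans (by gcongr)
    _ ≤ 4 * R * (n + 1) ^ 2 := by nlinarith
    _ ≤ 4 * R * (|n * u| + 2) ^ 2 := by gcongr 4 * R * ?_ ^ 2; linarith

theorem growth_bound_of_posKernel_general (r : ℝ → ℂ) (hcont : Continuous r)
    (hpos : IsPosKernel (Kker r) Set.univ) :
    ∃ M > (0 : ℝ), ∀ t : ℝ, ‖r t‖ ≤ M * (1 + |t| ^ 3) := by
  obtain ⟨R, hR⟩ :=
    isCompact_Icc.exists_bound_of_continuousOn (hcont.continuousOn (s := Icc (-1 : ℝ) 1))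
  have hR0 : 0 ≤ R := (norm_nonneg _).trans (hR 0 (by norm_num))
  refine ⟨36 * R + 1, by positivity, fun t ↦ ?_⟩
  calc ‖r t‖ ≤ 4 * R * (|t| + 2) ^ 2 := norm_apply_le_of_norm_le_on_Icc hpos hR t
    _ ≤ 4 * R * (9 * (1 + |t| ^ 3)) := by gcongr; exact sq_add_two_le (abs_nonneg t)
    _ ≤ (36 * R + 1) * (1 + |t| ^ 3) := by nlinarith [pow_nonneg (abs_nonneg t) 3]

/-- If `r` is continuous, hermitian, and the kernel `K_r` is positive on `ℝ`, then
`|r(t)| ≤ M (1 + |t|³)` for some `M > 0`. -/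
theorem growth_bound_of_posKernel (r : ℝ → ℂ) (hcont : Continuous r)
    (hsym : ∀ t : ℝ, r (-t) = (starRingEnd ℂ) (r t))
    (hpos : IsPosKernel (Kker r) Set.univ) :
    ∃ M > (0 : ℝ), ∀ t : ℝ, ‖r t‖ ≤ M * (1 + |t| ^ 3) :=
  growth_bound_of_posKernel_general r hcont hpos
end

section
/- Let r : ℝ → ℂ satisfy r(0) = 0 and r(−t) = conj(r(t)) for all t ∈ ℝ, and assume the kernel K_r(t,s) = r(t) + conj(r(s)) − r(t−s) − r(0) is positive on ℝ. Then for every t ∈ ℝ, |2r(t) − r(2t)| ≤ 2|Re r(t)|, and consequently |r(2t)| ≤ 4|r(t)|. -/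
open MeasureTheory Complex ComplexConjugate

/-! Testing `K_r` at the two points `t, -t` with `r(0) = 0` gives the hermitian matrix
`[[2 Re r(t), b], [conj b, 2 Re r(t)]]` with `b = 2r(t) - r(2t)`; positivity of a
`2 × 2` hermitian matrix with equal diagonal entries `a` forces `‖b‖ ≤ a`. -/

theorem IsPosKernel.re_two_point_nonneg {K : ℝ → ℝ → ℂ} {A : Set ℝ} (hK : IsPosKernel K A)
    {s u : ℝ} (hs : s ∈ A) (hu : u ∈ A) (c d : ℂ) :
    0 ≤ (c * conj c * K s s + c * conj d * K s u + d * conj c * K u s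
      + d * conj d * K u u).re := by
  have h := (hK 2 ![s, u] (Fin.forall_fin_two.2 ⟨hs, hu⟩) ![c, d]).2
  simpa only [Fin.sum_univ_two, Matrix.cons_val_zero, Matrix.cons_val_one, add_assoc] using h

theorem norm_le_of_re_two_point_nonneg {a : ℝ} {b : ℂ}
    (h : ∀ c d : ℂ, 0 ≤ (c * conj c * a + c * conj d * b + d * conj c * conj b
      + d * conj d * a).re) :
    ‖b‖ ≤ a := by
  rcases eq_or_ne b 0 with rfl | hb
  · simpa using h 1 0
  have hnb : 0 < ‖b‖ := norm_pos_iff.2 hb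
  have hform : ‖b‖ * conj (‖b‖ : ℂ) * a + ‖b‖ * conj (-b) * b + -b * conj (‖b‖ : ℂ) * conj b
      + -b * conj (-b) * a = ((2 * ‖b‖ ^ 2 * (a - ‖b‖) : ℝ) : ℂ) := by
    simp only [conj_ofReal, map_neg]
    have hbb : b * conj b = (‖b‖ : ℂ) ^ 2 := mul_conj' b
    push_cast
    linear_combination ((a : ℂ) - 2 * ‖b‖) * hbb
  have h' := h ‖b‖ (-b)
  rw [hform, ofReal_re] at h'
  nlinarith [mul_pos hnb hnb]

theorem Kker_self {r : ℝ → ℂ} (hr0 : r 0 = 0) (t : ℝ) :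
    Kker r t t = ((2 * (r t).re : ℝ) : ℂ) := by
  rw [Kker, sub_self, hr0, sub_zero, sub_zero, add_conj]

theorem Kker_neg_neg {r : ℝ → ℂ} (hr0 : r 0 = 0) (hsym : ∀ t : ℝ, r (-t) = conj (r t))
    (t : ℝ) : Kker r (-t) (-t) = ((2 * (r t).re : ℝ) : ℂ) := by
  rw [Kker, sub_self, hr0, sub_zero, sub_zero, hsym, conj_conj, add_comm, add_conj]

theorem Kker_self_neg {r : ℝ → ℂ} (hr0 : r 0 = 0) (hsym : ∀ t : ℝ, r (-t) = conj (r t))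
    (t : ℝ) : Kker r t (-t) = 2 * r t - r (2 * t) := by
  rw [Kker, hsym, conj_conj, hr0, sub_zero, sub_neg_eq_add, ← two_mul t]
  ring

theorem Kker_neg_self {r : ℝ → ℂ} (hr0 : r 0 = 0) (hsym : ∀ t : ℝ, r (-t) = conj (r t))
    (t : ℝ) : Kker r (-t) t = conj (2 * r t - r (2 * t)) := by
  rw [Kker, hsym, hr0, sub_zero, show -t - t = -(2 * t) by ring, hsym]
  simp only [map_sub, map_mul, map_ofNat]
  ring

theorem norm_two_mul_sub_le_two_mul_re {r : ℝ → ℂ} (hr0 : r 0 = 0)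
    (hsym : ∀ t : ℝ, r (-t) = conj (r t))
    (hpos : IsPosKernel (Kker r) Set.univ) (t : ℝ) :
    ‖2 * r t - r (2 * t)‖ ≤ 2 * (r t).re := by
  refine norm_le_of_re_two_point_nonneg fun c d => ?_
  have h := hpos.re_two_point_nonneg (Set.mem_univ t) (Set.mem_univ (-t)) c d
  rwa [Kker_self hr0, Kker_self_neg hr0 hsym, Kker_neg_self hr0 hsym,
    Kker_neg_neg hr0 hsym] at h

/-- If `r(0) = 0`, `r` is hermitian and `K_r` is positive on `ℝ`, then
`|2r(t) - r(2t)| ≤ 2|Re r(t)|` and hence `|r(2t)| ≤ 4|r(t)|`. -/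
theorem doubling_bound_of_posKernel (r : ℝ → ℂ) (hr0 : r 0 = 0)
    (hsym : ∀ t : ℝ, r (-t) = (starRingEnd ℂ) (r t))
    (hpos : IsPosKernel (Kker r) Set.univ) :
    ∀ t : ℝ, ‖2 * r t - r (2 * t)‖ ≤ 2 * |(r t).re| ∧ ‖r (2 * t)‖ ≤ 4 * ‖r t‖ := by
  intro t
  have hb : ‖2 * r t - r (2 * t)‖ ≤ 2 * |(r t).re| :=
    (norm_two_mul_sub_le_two_mul_re hr0 hsym hpos t).trans (by gcongr; exact le_abs_self _)
  refine ⟨hb, ?_⟩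
  calc ‖r (2 * t)‖ = ‖2 * r t - (2 * r t - r (2 * t))‖ := by rw [sub_sub_cancel]
    _ ≤ ‖2 * r t‖ + ‖2 * r t - r (2 * t)‖ := norm_sub_le _ _
    _ ≤ 2 * ‖r t‖ + 2 * ‖r t‖ := by
      rw [norm_mul, Complex.norm_two]
      gcongr
      exact hb.trans (by gcongr; exact abs_re_le_norm _)
    _ = 4 * ‖r t‖ := by ring
end

section
/- Let m(u) = u⁴ e^{−2u²}, so that √(m(u)) = u² e^{−u²}. Then for every t > 0 and s ∈ ℝ, (T_m 1_{[0,t]})(s) = (1/(4√π)) ( (t−s) e^{−(t−s)²/4} + s e^{−s²/4} ); explicitly, (1/2π) ∫_ℝ e^{isu} u² e^{−u²} (e^{−itu} − 1)/(−iu) du = (1/(4√π)) ( (t−s) e^{−(t−s)²/4} + s e^{−s²/4} ). In particular T_m 1_{[0,t]} does not have support contained in [0,t]. -/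
/-!
Since `u² / (-iu) = iu`, the integrand is `i u e^{i(s-t)u - u²} - i u e^{isu - u²}`, so everything
reduces to first moments of modulated Gaussians. Integrating the derivative of `e^{iau - bu²}`
over `ℝ` gives `∫ u e^{iau - bu²} du = (ia / 2b) ∫ e^{iau - bu²} du`, and the last integral is the
Fourier transform of a Gaussian.

The resulting function of `s` is continuous and equals `t e^{-t²/4} / (4√π) ≠ 0` at `s = 0`; its
support is therefore an open set containing the endpoint `0`, so it cannot lie inside `[0, t]`.
-/

open MeasureTheory Complex Real Set Function

theorem hasDerivAt_fourier_gaussian (a b : ℂ) (u : ℝ) :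
    HasDerivAt (fun u : ℝ => cexp (I * a * u) * cexp (-b * u ^ 2))
      ((I * a - 2 * b * u) * (cexp (I * a * u) * cexp (-b * u ^ 2))) u :=
  (((hasDerivAt_id (u : ℂ)).const_mul (I * a)).cexp.mul
    ((hasDerivAt_pow 2 (u : ℂ)).const_mul (-b)).cexp).comp_ofReal.congr_deriv (by simp; ring)

theorem norm_cexp_I_mul_ofReal_mul (a u : ℝ) : ‖cexp (I * a * u)‖ = 1 := by
  rw [mul_assoc, ← ofReal_mul, norm_exp_I_mul_ofReal]

section GaussianMoment

variable {b : ℂ}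

theorem integrable_fourier_gaussian (hb : 0 < b.re) (a : ℝ) :
    Integrable fun u : ℝ => cexp (I * a * u) * cexp (-b * u ^ 2) :=
  (integrable_cexp_neg_mul_sq hb).mono (by fun_prop) (.of_forall fun u => by
    rw [norm_mul, norm_cexp_I_mul_ofReal_mul, one_mul])

theorem integrable_mul_fourier_gaussian (hb : 0 < b.re) (a : ℝ) :
    Integrable fun u : ℝ => (u : ℂ) * (cexp (I * a * u) * cexp (-b * u ^ 2)) :=
  (integrable_mul_cexp_neg_mul_sq hb).mono (by fun_prop) (.of_forall fun u => by
    rw [norm_mul, norm_mul, norm_mul, norm_cexp_I_mul_ofReal_mul, one_mul])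

theorem integral_mul_fourier_gaussian (hb : 0 < b.re) (a : ℝ) :
    ∫ u : ℝ, (u : ℂ) * (cexp (I * a * u) * cexp (-b * u ^ 2)) =
      I * a / (2 * b) * ((π / b) ^ (1 / 2 : ℂ) * cexp (-a ^ 2 / (4 * b))) := by
  rw [← fourierIntegral_gaussian hb]
  have hb0 : b ≠ 0 := by rintro rfl; simp at hb
  have hG := integrable_fourier_gaussian hb a
  have hM := integrable_mul_fourier_gaussian hb a
  have hzero := integral_eq_zero_of_hasDerivAt_of_integrable (hasDerivAt_fourier_gaussian a b)
    ((hG.const_mul (I * a)).sub (hM.const_mul (2 * b)) |>.congr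
      (.of_forall fun u => by simp only [Pi.sub_apply]; ring)) hG
  have hsplit : ∫ u : ℝ, (I * a - 2 * b * u) * (cexp (I * a * u) * cexp (-b * u ^ 2)) =
      I * a * (∫ u : ℝ, cexp (I * a * u) * cexp (-b * u ^ 2)) -
        2 * b * ∫ u : ℝ, (u : ℂ) * (cexp (I * a * u) * cexp (-b * u ^ 2)) := by
    rw [← integral_const_mul, ← integral_const_mul,
      ← integral_sub (hG.const_mul _) (hM.const_mul _)]
    congr 1 with u
    ring
  rw [hsplit] at hzero
  rw [div_mul_eq_mul_div, eq_div_iff (mul_ne_zero two_ne_zero hb0)]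
  linear_combination -hzero

end GaussianMoment

theorem ofReal_cpow_one_half {x : ℝ} (hx : 0 ≤ x) : (x : ℂ) ^ (1 / 2 : ℂ) = (√x : ℝ) := by
  rw [Real.sqrt_eq_rpow, ofReal_cpow hx]
  norm_num

theorem not_support_subset_Icc_of_ne_zero {α M : Type*} [TopologicalSpace α] [LinearOrder α]
    [OrderTopology α] [DenselyOrdered α] [NoMinOrder α] [Zero M] [TopologicalSpace M] [T1Space M]
    {f : α → M} (hf : Continuous f) {a b : α} (ha : f a ≠ 0) : ¬ support f ⊆ Icc a b := by
  intro h
  have ha_int : a ∈ interior (Ici a) :=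
    interior_mono (h.trans Icc_subset_Ici_self) (hf.isOpen_support.interior_eq.symm ▸ ha)
  rw [interior_Ici] at ha_int
  exact lt_irrefl a ha_int

theorem Tm_indicator_integrand_eq (s t u : ℝ) :
    cexp (I * s * u) * (u : ℂ) ^ 2 * Real.exp (-u ^ 2) * (cexp (-(I * t * u)) - 1) /
        (-(I * u)) =
      I * (u * (cexp (I * ↑(s - t) * u) * cexp (-1 * u ^ 2))) -
        I * (u * (cexp (I * s * u) * cexp (-1 * u ^ 2))) := by
  rcases eq_or_ne u 0 with rfl | hu
  · simp
  have hshift : cexp (I * ↑(s - t) * u) = cexp (I * s * u) * cexp (-(I * t * u)) := by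
    rw [← Complex.exp_add]
    push_cast
    ring_nf
  rw [hshift, div_eq_iff (by simp [hu]), ofReal_exp, neg_one_mul]
  push_cast
  linear_combination (cexp (I * s * u) * cexp (-u ^ 2) * (cexp (-(I * t * u)) - 1) * u ^ 2) * I_sq

/-- For `m(u) = u⁴e^{-2u²}` (so `√m(u) = u²e^{-u²}`) and `t > 0`,
`(T_m 1_{[0,t]})(s) = (1/(4√π))((t-s)e^{-(t-s)²/4} + s e^{-s²/4})`, computed as the
absolutely convergent inverse Fourier integral
`(1/2π) ∫ e^{isu} u²e^{-u²} (e^{-itu}-1)/(-iu) du`.  In particular the support of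
`T_m 1_{[0,t]}` is not contained in `[0,t]`. -/
theorem Tm_indicator_gaussian_example (t : ℝ) (ht : 0 < t) :
    (∀ s : ℝ,
      (1 / (2 * (Real.pi : ℂ))) *
          ∫ u : ℝ, Complex.exp (Complex.I * s * u) * (u : ℂ) ^ 2 *
            Real.exp (-u ^ 2) * (Complex.exp (-(Complex.I * t * u)) - 1) /
              (-(Complex.I * u)) =
        ((1 / (4 * Real.sqrt Real.pi) *
          ((t - s) * Real.exp (-(t - s) ^ 2 / 4) + s * Real.exp (-s ^ 2 / 4)) : ℝ) : ℂ)) ∧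
    ¬ Function.support (fun s : ℝ =>
        1 / (4 * Real.sqrt Real.pi) *
          ((t - s) * Real.exp (-(t - s) ^ 2 / 4) + s * Real.exp (-s ^ 2 / 4)))
      ⊆ Set.Icc 0 t := by
  have hone : (0 : ℝ) < (1 : ℂ).re := by simp
  refine ⟨fun s => ?_, not_support_subset_Icc_of_ne_zero (by fun_prop) ?_⟩
  · have hM (a : ℝ) := (integrable_mul_fourier_gaussian hone a).const_mul I
    rw [integral_congr_ae (.of_forall (Tm_indicator_integrand_eq s t)), integral_sub (hM _) (hM _),
      integral_const_mul, integral_const_mul, integral_mul_fourier_gaussian hone,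
      integral_mul_fourier_gaussian hone, div_one, ofReal_cpow_one_half pi_pos.le]
    have hpi : (π : ℂ) = (√π : ℝ) * (√π : ℝ) := by rw [← ofReal_mul, mul_self_sqrt pi_pos.le]
    have hsqrt : ((√π : ℝ) : ℂ) ≠ 0 := by simp [(sqrt_pos.2 pi_pos).ne']
    rw [hpi]
    push_cast
    field_simp
    ring_nf
    simp only [I_sq]
    ring_nf
  · simp [ht.ne', (sqrt_pos.2 pi_pos).ne']
end

section
/- Let m : ℝ → [0,∞) be measurable satisfying m(u) ≤ K|u|^{−b} for 0 < |u| ≤ 1 and m(u) ≤ K′ for |u| > 1, with 0 ≤ b < 1 and K, K′ > 0. Define ρ(t) = ∫_ℝ (1 − cos(tu)) m(u)/u² du for t ∈ ℝ. Then for all t ≥ 0, ρ(t) ≤ (K/(1−b)) t² + 5K′ t; in particular there exist constants C₁, C₂ > 0 with ρ(t) ≤ C₁ t² + C₂ t for all t ≥ 0. -/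
/-!
The kernel `(1 - cos (t u)) / u²` is at most `min (t²/2) (2/u²)`. On `|u| ≤ 1` the bound `t²/2`
together with `m u ≤ K |u|^(-b)` contributes `K t² / (1 - b)`; on `|u| > 1` we use `m u ≤ K'` and
integrate `min (t²/2) (2/u²)` over the whole line: the two bounds cross at `|u| = 2/t`, and each
side contributes `2t`, so this part is at most `4 K' t`.
-/

open MeasureTheory Set Real

theorem integrable_comp_abs {E : Type*} [NormedAddCommGroup E] {f : ℝ → E}
    (hf : IntegrableOn f (Ioi 0)) : Integrable (fun x => f |x|) := by
  have hg : Integrable ((Ioi 0).indicator f) := (integrable_indicator_iff measurableSet_Ioi).2 hf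
  refine (hg.add hg.comp_neg).congr ?_
  filter_upwards [compl_mem_ae_iff.2 (measure_singleton (0 : ℝ))] with x hx
  rcases lt_or_gt_of_ne (show x ≠ 0 from hx) with h | h
  · simp [h, h.not_gt, abs_of_neg h]
  · simp [h, h.le, abs_of_pos h]

theorem integrableOn_Ioc_zero_one_rpow {r : ℝ} (hr : -1 < r) :
    IntegrableOn (fun v : ℝ => v ^ r) (Ioc 0 1) :=
  (intervalIntegrable_iff_integrableOn_Ioc_of_le zero_le_one).1
    (intervalIntegral.intervalIntegrable_rpow' hr)

theorem integral_Ioc_zero_one_rpow {r : ℝ} (hr : -1 < r) :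
    ∫ v in Ioc (0 : ℝ) 1, v ^ r = 1 / (r + 1) := by
  rw [← intervalIntegral.integral_of_le zero_le_one, integral_rpow (Or.inl hr),
    one_rpow, zero_rpow (by linarith), sub_zero]

theorem integrableOn_Ioi_div_sq (c : ℝ) {s : ℝ} (hs : 0 < s) :
    IntegrableOn (fun v : ℝ => c / v ^ 2) (Ioi s) := by
  refine IntegrableOn.congr_fun
    ((integrableOn_Ioi_rpow_of_lt (by norm_num : (-2 : ℝ) < -1) hs).const_mul c)
    (fun v hv => ?_) measurableSet_Ioi
  simp [rpow_neg (hs.trans hv).le, div_eq_mul_inv]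

theorem integral_Ioi_div_sq (c : ℝ) {s : ℝ} (hs : 0 < s) :
    ∫ v in Ioi s, c / v ^ 2 = c / s := by
  have : EqOn (fun v : ℝ => c / v ^ 2) (fun v => c * v ^ (-2 : ℝ)) (Ioi s) := fun v hv => by
    simp [rpow_neg (hs.trans hv).le, div_eq_mul_inv]
  rw [setIntegral_congr_fun measurableSet_Ioi this, integral_const_mul,
    integral_Ioi_rpow_of_lt (by norm_num) hs]
  norm_num [rpow_neg_one, div_eq_mul_inv]

theorem min_div_sq_eqOn_Ioc {c s : ℝ} (hc : 0 ≤ c) :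
    EqOn (fun v : ℝ => min (c / s ^ 2) (c / v ^ 2)) (fun _ => c / s ^ 2) (Ioc 0 s) :=
  fun v hv => min_eq_left (div_le_div_of_nonneg_left hc (by have := hv.1; positivity)
    (pow_le_pow_left₀ hv.1.le hv.2 2))

theorem min_div_sq_eqOn_Ioi {c s : ℝ} (hc : 0 ≤ c) (hs : 0 < s) :
    EqOn (fun v : ℝ => min (c / s ^ 2) (c / v ^ 2)) (fun v => c / v ^ 2) (Ioi s) :=
  fun v hv => min_eq_right (div_le_div_of_nonneg_left hc (by positivity)
    (pow_le_pow_left₀ hs.le (le_of_lt hv) 2))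

theorem integrableOn_Ioi_min_div_sq {c s : ℝ} (hc : 0 ≤ c) (hs : 0 < s) :
    IntegrableOn (fun v : ℝ => min (c / s ^ 2) (c / v ^ 2)) (Ioi 0) := by
  rw [← Ioc_union_Ioi_eq_Ioi hs.le]
  exact ((integrableOn_const measure_Ioc_lt_top.ne).congr_fun (min_div_sq_eqOn_Ioc hc).symm
    measurableSet_Ioc).union ((integrableOn_Ioi_div_sq c hs).congr_fun
    (min_div_sq_eqOn_Ioi hc hs).symm measurableSet_Ioi)

theorem integral_Ioi_min_div_sq {c s : ℝ} (hc : 0 ≤ c) (hs : 0 < s) :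
    ∫ v in Ioi 0, min (c / s ^ 2) (c / v ^ 2) = 2 * c / s := by
  have h := integrableOn_Ioi_min_div_sq hc hs
  rw [← Ioc_union_Ioi_eq_Ioi hs.le] at h ⊢
  rw [setIntegral_union Ioc_disjoint_Ioi_same measurableSet_Ioi (h.mono_set subset_union_left)
    (h.mono_set subset_union_right), setIntegral_congr_fun measurableSet_Ioc
    (min_div_sq_eqOn_Ioc hc), setIntegral_congr_fun measurableSet_Ioi (min_div_sq_eqOn_Ioi hc hs),
    setIntegral_const, integral_Ioi_div_sq c hs, Real.volume_real_Ioc_of_le hs.le, smul_eq_mul]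
  field_simp
  ring

theorem integrable_min_div_sq {c s : ℝ} (hc : 0 ≤ c) (hs : 0 < s) :
    Integrable (fun u : ℝ => min (c / s ^ 2) (c / u ^ 2)) := by
  simpa only [sq_abs] using integrable_comp_abs (integrableOn_Ioi_min_div_sq hc hs)

theorem integral_min_div_sq {c s : ℝ} (hc : 0 ≤ c) (hs : 0 < s) :
    ∫ u, min (c / s ^ 2) (c / u ^ 2) = 4 * c / s := by
  have h := integral_comp_abs (f := fun v => min (c / s ^ 2) (c / v ^ 2))
  simp only [sq_abs] at h
  rw [h, integral_Ioi_min_div_sq hc hs]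
  ring

theorem integrable_indicator_Iic_one_rpow_abs {r : ℝ} (hr : -1 < r) :
    Integrable (fun u : ℝ => (Iic 1).indicator (· ^ r) |u|) := by
  refine integrable_comp_abs ?_
  rw [IntegrableOn, integrable_indicator_iff measurableSet_Iic, IntegrableOn,
    Measure.restrict_restrict measurableSet_Iic, inter_comm, Ioi_inter_Iic]
  exact integrableOn_Ioc_zero_one_rpow hr

theorem integral_indicator_Iic_one_rpow_abs {r : ℝ} (hr : -1 < r) :
    ∫ u, (Iic 1).indicator (· ^ r) |u| = 2 / (r + 1) := by
  rw [integral_comp_abs (f := (Iic 1).indicator (· ^ r)), setIntegral_indicator measurableSet_Iic,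
    Ioi_inter_Iic, integral_Ioc_zero_one_rpow hr]
  ring

theorem one_sub_cos_mul_div_sq_le_min (t u : ℝ) :
    (1 - cos (t * u)) / u ^ 2 ≤ min (t ^ 2 / 2) (2 / u ^ 2) := by
  rcases eq_or_ne u 0 with rfl | hu
  · simp [div_nonneg, sq_nonneg]
  refine le_min ?_
    (div_le_div_of_nonneg_right (by linarith [neg_one_le_cos (t * u)]) (sq_nonneg u))
  rw [div_le_iff₀ (by positivity)]
  nlinarith [one_sub_sq_div_two_le_cos (x := t * u)]

section

variable {m : ℝ → ℝ} {b K K' : ℝ}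

theorem one_sub_cos_mul_mul_div_sq_le (hm0 : ∀ u, 0 ≤ m u) (hK : 0 ≤ K) (hK' : 0 ≤ K')
    (hm1 : ∀ u : ℝ, u ≠ 0 → |u| ≤ 1 → m u ≤ K * |u| ^ (-b))
    (hm2 : ∀ u : ℝ, 1 < |u| → m u ≤ K') (t u : ℝ) :
    (1 - cos (t * u)) * m u / u ^ 2 ≤
      t ^ 2 / 2 * K * (Iic 1).indicator (· ^ (-b)) |u| + K' * min (t ^ 2 / 2) (2 / u ^ 2) := by
  have hker := one_sub_cos_mul_div_sq_le_min t u
  have hmin0 : 0 ≤ K' * min (t ^ 2 / 2) (2 / u ^ 2) := mul_nonneg hK' (by positivity)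
  rcases eq_or_ne u 0 with rfl | hu0
  · have hind : 0 ≤ (Iic 1).indicator (fun v : ℝ => v ^ (-b)) |0| :=
      indicator_apply_nonneg fun _ => rpow_nonneg (abs_nonneg 0) _
    exact (by simp : (1 - cos (t * 0)) * m 0 / 0 ^ 2 = 0).trans_le
      (add_nonneg (mul_nonneg (by positivity) hind) hmin0)
  rw [mul_div_right_comm]
  rcases le_or_gt |u| 1 with hu | hu
  · rw [indicator_of_mem (mem_Iic.2 hu), mul_assoc]
    calc _ ≤ t ^ 2 / 2 * (K * |u| ^ (-b)) :=
          mul_le_mul (hker.trans (min_le_left _ _)) (hm1 u hu0 hu) (hm0 u) (by positivity)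
      _ ≤ _ := le_add_of_nonneg_right hmin0
  · rw [indicator_of_notMem (notMem_Iic.2 hu), mul_zero, zero_add, mul_comm K']
    exact mul_le_mul hker (hm2 u hu) (hm0 u) (by positivity)

theorem integral_one_sub_cos_mul_mul_div_sq_le (hm0 : ∀ u, 0 ≤ m u) (hb1 : b < 1)
    (hK : 0 ≤ K) (hK' : 0 ≤ K')
    (hm1 : ∀ u : ℝ, u ≠ 0 → |u| ≤ 1 → m u ≤ K * |u| ^ (-b))
    (hm2 : ∀ u : ℝ, 1 < |u| → m u ≤ K') {t : ℝ} (ht : 0 ≤ t) :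
    ∫ u, (1 - cos (t * u)) * m u / u ^ 2 ≤ K / (1 - b) * t ^ 2 + 4 * K' * t := by
  rcases ht.eq_or_lt with rfl | ht
  · simp
  have hr : -1 < -b := by linarith
  have hs : 0 < 2 / t := by positivity
  have hts : t ^ 2 / 2 = 2 / (2 / t) ^ 2 := by field_simp
  have hnonneg (u : ℝ) : 0 ≤ (1 - cos (t * u)) * m u / u ^ 2 :=
    div_nonneg (mul_nonneg (sub_nonneg.2 (cos_le_one _)) (hm0 u)) (sq_nonneg u)
  have hint₁ := (integrable_indicator_Iic_one_rpow_abs hr).const_mul (t ^ 2 / 2 * K)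
  have hint₂ := (integrable_min_div_sq zero_le_two hs).const_mul K'
  rw [← hts] at hint₂
  calc ∫ u, (1 - cos (t * u)) * m u / u ^ 2
      ≤ ∫ u, (t ^ 2 / 2 * K * (Iic 1).indicator (· ^ (-b)) |u| +
          K' * min (t ^ 2 / 2) (2 / u ^ 2)) :=
        integral_mono_of_nonneg (ae_of_all _ hnonneg) (hint₁.add hint₂)
          (ae_of_all _ (one_sub_cos_mul_mul_div_sq_le hm0 hK hK' hm1 hm2 t))
    _ = t ^ 2 / 2 * K * (2 / (-b + 1)) + K' * (4 * 2 / (2 / t)) := by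
        rw [integral_add hint₁ hint₂, integral_const_mul, integral_const_mul,
          integral_indicator_Iic_one_rpow_abs hr, hts, integral_min_div_sq zero_le_two hs]
    _ = K / (1 - b) * t ^ 2 + 4 * K' * t := by
        have : 1 - b ≠ 0 := by linarith
        rw [neg_add_eq_sub]
        field_simp

end

theorem quadratic_growth_of_re_r_general (m : ℝ → ℝ) (hm0 : ∀ u, 0 ≤ m u)
    (b K K' : ℝ) (hb1 : b < 1) (hK : 0 < K) (hK' : 0 < K')
    (hm1 : ∀ u : ℝ, u ≠ 0 → |u| ≤ 1 → m u ≤ K * |u| ^ (-b))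
    (hm2 : ∀ u : ℝ, 1 < |u| → m u ≤ K') :
    (∀ t : ℝ, 0 ≤ t →
      (∫ u : ℝ, (1 - Real.cos (t * u)) * m u / u ^ 2) ≤
        K / (1 - b) * t ^ 2 + 5 * K' * t) ∧
    ∃ C₁ > (0 : ℝ), ∃ C₂ > (0 : ℝ), ∀ t : ℝ, 0 ≤ t →
      (∫ u : ℝ, (1 - Real.cos (t * u)) * m u / u ^ 2) ≤ C₁ * t ^ 2 + C₂ * t := by
  have hρ (t : ℝ) (ht : 0 ≤ t) :
      ∫ u : ℝ, (1 - cos (t * u)) * m u / u ^ 2 ≤ K / (1 - b) * t ^ 2 + 5 * K' * t :=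
    (integral_one_sub_cos_mul_mul_div_sq_le hm0 hb1 hK.le hK'.le hm1 hm2 ht).trans
      (by nlinarith)
  exact ⟨hρ, K / (1 - b), div_pos hK (sub_pos.2 hb1), 5 * K', by positivity, hρ⟩

/-- If `m(u) ≤ K|u|^{-b}` for `0 < |u| ≤ 1` (with `0 ≤ b < 1`) and `m(u) ≤ K'` for
`|u| > 1`, then `ρ(t) = ∫ (1 - cos(tu)) m(u)/u² du` satisfies
`ρ(t) ≤ (K/(1-b)) t² + 5K' t` for `t ≥ 0`; in particular `ρ(t) ≤ C₁t² + C₂t`. -/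
theorem quadratic_growth_of_re_r (m : ℝ → ℝ) (hm0 : ∀ u, 0 ≤ m u)
    (hmeas : Measurable m)
    (hint : Integrable (fun u : ℝ => m u / (u ^ 2 + 1)))
    (b K K' : ℝ) (hb0 : 0 ≤ b) (hb1 : b < 1) (hK : 0 < K) (hK' : 0 < K')
    (hm1 : ∀ u : ℝ, u ≠ 0 → |u| ≤ 1 → m u ≤ K * |u| ^ (-b))
    (hm2 : ∀ u : ℝ, 1 < |u| → m u ≤ K') :
    (∀ t : ℝ, 0 ≤ t →
      (∫ u : ℝ, (1 - Real.cos (t * u)) * m u / u ^ 2) ≤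
        K / (1 - b) * t ^ 2 + 5 * K' * t) ∧
    ∃ C₁ > (0 : ℝ), ∃ C₂ > (0 : ℝ), ∀ t : ℝ, 0 ≤ t →
      (∫ u : ℝ, (1 - Real.cos (t * u)) * m u / u ^ 2) ≤ C₁ * t ^ 2 + C₂ * t :=
  quadratic_growth_of_re_r_general m hm0 b K K' hb1 hK hK' hm1 hm2
end
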